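/- With the topology-optimization data below, suppose (x̂, û, γ̂₁, γ̂₂, ĝ) is an optimal solution of problem (P2), i.e., it is feasible for (P2) and γ̂₁ + γ̂₂ ≤ γ₁ + γ₂ for every (x, u, γ₁, γ₂, g) feasible for (P2). Then (x̂, û, γ̂₁ + γ̂₂) is an optimal solution of problem (P1), i.e., it is feasible for (P1) and γ̂₁ + γ̂₂ ≤ γ for every (x, u, γ) feasible for (P1). -/

import Mathlib

/-!
(P2) is (P1) with the structure cut along the interface `N₁ ∩ N₂`: the stiffness matrix
splits as `K⁽¹⁾(x) + K⁽²⁾(x)` over the two subdomains, and `g` is the interface force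
that subdomain 2 exerts on subdomain 1. Adding the two equilibrium equations of a (P2)-feasible
point gives that of (P1), and the compliances add up since the interface terms `±gᵀu` cancel.
Conversely, a (P1)-feasible `(x, u)` becomes (P2)-feasible with `g := K⁽¹⁾(x) u − f⁽¹⁾`:
this vector is supported on `N₁` because `K⁽¹⁾(x)` and `f⁽¹⁾` are, and on `N₂` because it
equals `f⁽²⁾ − K⁽²⁾(x) u`. Hence the two problems have the same feasible objective values.
-/

open Matrix

/-- An `n×n` matrix is supported on `I` if `Y i j = 0` whenever `i ∉ I` or `j ∉ I`. -/
def MatSupportedOn {n : ℕ} (Y : Matrix (Fin n) (Fin n) ℝ) (I : Finset (Fin n)) : Prop :=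
  ∀ i j, (i ∉ I ∨ j ∉ I) → Y i j = 0

/-- A vector is supported on `I` if `v i = 0` for every `i ∉ I`. -/
def VecSupportedOn {n : ℕ} (v : Fin n → ℝ) (I : Finset (Fin n)) : Prop :=
  ∀ i, i ∉ I → v i = 0

/-- Feasibility for problem (P1): minimize `γ` subject to
`(Σ xᵢ Kᵢ) u = f`, `fᵀu ≤ γ`, `Σ xᵢ ≤ V`, `x̲ᵢ ≤ xᵢ ≤ x̄ᵢ`. -/
def P1Feasible {n m : ℕ} (K : Fin m → Matrix (Fin n) (Fin n) ℝ) (f : Fin n → ℝ)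
    (V : ℝ) (xlo xhi : Fin m → ℝ) (x : Fin m → ℝ) (u : Fin n → ℝ) (γ : ℝ) : Prop :=
  (∑ i, x i • K i).mulVec u = f ∧ f ⬝ᵥ u ≤ γ ∧ (∑ i, x i) ≤ V ∧
    ∀ i, xlo i ≤ x i ∧ x i ≤ xhi i

/-- Feasibility for problem (P2): minimize `γ₁ + γ₂` subject to
`g` supported on `N₁ ∩ N₂`, `(Σ_{i∈𝒟₁} xᵢ Kᵢ) u = f⁽¹⁾ + g`,
`(Σ_{i∈𝒟₂} xᵢ Kᵢ) u = f⁽²⁾ − g`, `(f⁽¹⁾+g)ᵀu ≤ γ₁`, `(f⁽²⁾−g)ᵀu ≤ γ₂`,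
`Σ xᵢ ≤ V`, `x̲ᵢ ≤ xᵢ ≤ x̄ᵢ`. -/
def P2Feasible {n m : ℕ} (K : Fin m → Matrix (Fin n) (Fin n) ℝ)
    (D₁ D₂ : Finset (Fin m)) (N₁ N₂ : Finset (Fin n))
    (f₁ f₂ : Fin n → ℝ) (V : ℝ) (xlo xhi : Fin m → ℝ)
    (x : Fin m → ℝ) (u : Fin n → ℝ) (γ₁ γ₂ : ℝ) (g : Fin n → ℝ) : Prop :=
  VecSupportedOn g (N₁ ∩ N₂) ∧
  (∑ i ∈ D₁, x i • K i).mulVec u = f₁ + g ∧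
  (∑ i ∈ D₂, x i • K i).mulVec u = f₂ - g ∧
  (f₁ + g) ⬝ᵥ u ≤ γ₁ ∧ (f₂ - g) ⬝ᵥ u ≤ γ₂ ∧
  (∑ i, x i) ≤ V ∧ ∀ i, xlo i ≤ x i ∧ x i ≤ xhi i


section Support

variable {n : ℕ}

lemma VecSupportedOn.sub {v w : Fin n → ℝ} {I : Finset (Fin n)}
    (hv : VecSupportedOn v I) (hw : VecSupportedOn w I) : VecSupportedOn (v - w) I := by
  intro i hi
  simp [hv i hi, hw i hi]

lemma VecSupportedOn.inter {v : Fin n → ℝ} {I J : Finset (Fin n)}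
    (hI : VecSupportedOn v I) (hJ : VecSupportedOn v J) : VecSupportedOn v (I ∩ J) := by
  intro i hi
  rw [Finset.mem_inter, not_and_or] at hi
  exact hi.elim (hI i) (hJ i)

lemma MatSupportedOn.mulVec {Y : Matrix (Fin n) (Fin n) ℝ} {I : Finset (Fin n)}
    (hY : MatSupportedOn Y I) (u : Fin n → ℝ) : VecSupportedOn (Y *ᵥ u) I := by
  intro i hi
  rw [Matrix.mulVec, dotProduct]
  exact Finset.sum_eq_zero fun j _ => by rw [hY i j (Or.inl hi), zero_mul]

lemma MatSupportedOn.sum_smul {m : ℕ} {K : Fin m → Matrix (Fin n) (Fin n) ℝ}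
    {S : Finset (Fin m)} {I : Finset (Fin n)} (hK : ∀ i ∈ S, MatSupportedOn (K i) I)
    (x : Fin m → ℝ) : MatSupportedOn (∑ i ∈ S, x i • K i) I := by
  intro a b hab
  rw [Matrix.sum_apply]
  exact Finset.sum_eq_zero fun i hi => by simp [hK i hi a b hab]

end Support

section Decomposition

variable {n m : ℕ} {K : Fin m → Matrix (Fin n) (Fin n) ℝ} {D₁ D₂ : Finset (Fin m)}
  {N₁ N₂ : Finset (Fin n)} {f₁ f₂ : Fin n → ℝ} {V : ℝ} {xlo xhi : Fin m → ℝ}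

lemma sum_smul_eq_add_of_partition (hD : D₁ ∪ D₂ = Finset.univ) (hDdisj : D₁ ∩ D₂ = ∅)
    (x : Fin m → ℝ) :
    ∑ i, x i • K i = ∑ i ∈ D₁, x i • K i + ∑ i ∈ D₂, x i • K i := by
  rw [← Finset.sum_union (Finset.disjoint_iff_inter_eq_empty.mpr hDdisj), hD]

lemma add_sub_dotProduct_add (f₁ f₂ g u : Fin n → ℝ) :
    (f₁ + g) ⬝ᵥ u + (f₂ - g) ⬝ᵥ u = (f₁ + f₂) ⬝ᵥ u := by
  rw [← add_dotProduct, add_add_sub_cancel]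

lemma P2Feasible.p1Feasible (hD : D₁ ∪ D₂ = Finset.univ) (hDdisj : D₁ ∩ D₂ = ∅)
    {x : Fin m → ℝ} {u : Fin n → ℝ} {γ₁ γ₂ : ℝ} {g : Fin n → ℝ}
    (h : P2Feasible K D₁ D₂ N₁ N₂ f₁ f₂ V xlo xhi x u γ₁ γ₂ g) :
    P1Feasible K (f₁ + f₂) V xlo xhi x u (γ₁ + γ₂) := by
  obtain ⟨-, heq₁, heq₂, hγ₁, hγ₂, hvol, hbox⟩ := h
  refine ⟨?_, ?_, hvol, hbox⟩
  · rw [sum_smul_eq_add_of_partition hD hDdisj, add_mulVec, heq₁, heq₂, add_add_sub_cancel]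
  · rw [← add_sub_dotProduct_add f₁ f₂ g u]
    exact add_le_add hγ₁ hγ₂

lemma P1Feasible.exists_p2Feasible (hD : D₁ ∪ D₂ = Finset.univ) (hDdisj : D₁ ∩ D₂ = ∅)
    (hK₁ : ∀ i ∈ D₁, MatSupportedOn (K i) N₁) (hK₂ : ∀ i ∈ D₂, MatSupportedOn (K i) N₂)
    (hf₁ : VecSupportedOn f₁ N₁) (hf₂ : VecSupportedOn f₂ N₂)
    {x : Fin m → ℝ} {u : Fin n → ℝ} {γ : ℝ}
    (h : P1Feasible K (f₁ + f₂) V xlo xhi x u γ) :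
    ∃ γ₁ γ₂ g, P2Feasible K D₁ D₂ N₁ N₂ f₁ f₂ V xlo xhi x u γ₁ γ₂ g ∧ γ₁ + γ₂ ≤ γ := by
  obtain ⟨heq, hγ, hvol, hbox⟩ := h
  set g := (∑ i ∈ D₁, x i • K i) *ᵥ u - f₁
  have heq₂ : (∑ i ∈ D₂, x i • K i) *ᵥ u = f₂ - g := by
    rw [sum_smul_eq_add_of_partition hD hDdisj, add_mulVec] at heq
    linear_combination heq
  have hg : VecSupportedOn g (N₁ ∩ N₂) := by
    refine VecSupportedOn.inter ((MatSupportedOn.sum_smul hK₁ x).mulVec u |>.sub hf₁) ?_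
    rw [← sub_sub_cancel f₂ g, ← heq₂]
    exact hf₂.sub ((MatSupportedOn.sum_smul hK₂ x).mulVec u)
  refine ⟨_, _, g, ⟨hg, add_sub_cancel f₁ _ |>.symm, heq₂, le_rfl, le_rfl, hvol, hbox⟩, ?_⟩
  rwa [add_sub_dotProduct_add]

end Decomposition

theorem stmt9_general (n m : ℕ) (K : Fin m → Matrix (Fin n) (Fin n) ℝ)
    (D₁ D₂ : Finset (Fin m)) (hD : D₁ ∪ D₂ = Finset.univ) (hDdisj : D₁ ∩ D₂ = ∅)
    (N₁ N₂ : Finset (Fin n))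
    (hK₁ : ∀ i ∈ D₁, MatSupportedOn (K i) N₁)
    (hK₂ : ∀ i ∈ D₂, MatSupportedOn (K i) N₂)
    (f₁ f₂ : Fin n → ℝ)
    (hf₁ : VecSupportedOn f₁ N₁) (hf₂ : VecSupportedOn f₂ N₂)
    (V : ℝ) (xlo xhi : Fin m → ℝ)
    (xh : Fin m → ℝ) (uh : Fin n → ℝ) (γh₁ γh₂ : ℝ) (gh : Fin n → ℝ)
    (hfeas : P2Feasible K D₁ D₂ N₁ N₂ f₁ f₂ V xlo xhi xh uh γh₁ γh₂ gh)
    (hopt : ∀ x u γ₁ γ₂ g, P2Feasible K D₁ D₂ N₁ N₂ f₁ f₂ V xlo xhi x u γ₁ γ₂ g →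
      γh₁ + γh₂ ≤ γ₁ + γ₂) :
    P1Feasible K (f₁ + f₂) V xlo xhi xh uh (γh₁ + γh₂) ∧
    ∀ x u γ, P1Feasible K (f₁ + f₂) V xlo xhi x u γ → γh₁ + γh₂ ≤ γ := by
  refine ⟨hfeas.p1Feasible hD hDdisj, fun x u γ h => ?_⟩
  obtain ⟨γ₁, γ₂, g, hP2, hle⟩ := h.exists_p2Feasible hD hDdisj hK₁ hK₂ hf₁ hf₂
  exact (hopt x u γ₁ γ₂ g hP2).trans hle

theorem stmt9 (n m : ℕ) (K : Fin m → Matrix (Fin n) (Fin n) ℝ)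
    (hKsymm : ∀ i, (K i).IsSymm) (hKpsd : ∀ i, (K i).PosSemidef)
    (D₁ D₂ : Finset (Fin m)) (hD : D₁ ∪ D₂ = Finset.univ) (hDdisj : D₁ ∩ D₂ = ∅)
    (N₁ N₂ : Finset (Fin n)) (hN : N₁ ∪ N₂ = Finset.univ)
    (hK₁ : ∀ i ∈ D₁, MatSupportedOn (K i) N₁)
    (hK₂ : ∀ i ∈ D₂, MatSupportedOn (K i) N₂)
    (f₁ f₂ : Fin n → ℝ)
    (hf₁ : VecSupportedOn f₁ N₁) (hf₂ : VecSupportedOn f₂ N₂)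
    (V : ℝ) (xlo xhi : Fin m → ℝ)
    (xh : Fin m → ℝ) (uh : Fin n → ℝ) (γh₁ γh₂ : ℝ) (gh : Fin n → ℝ)
    (hfeas : P2Feasible K D₁ D₂ N₁ N₂ f₁ f₂ V xlo xhi xh uh γh₁ γh₂ gh)
    (hopt : ∀ x u γ₁ γ₂ g, P2Feasible K D₁ D₂ N₁ N₂ f₁ f₂ V xlo xhi x u γ₁ γ₂ g →
      γh₁ + γh₂ ≤ γ₁ + γ₂) :
    P1Feasible K (f₁ + f₂) V xlo xhi xh uh (γh₁ + γh₂) ∧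
    ∀ x u γ, P1Feasible K (f₁ + f₂) V xlo xhi x u γ → γh₁ + γh₂ ≤ γ :=
  stmt9_general n m K D₁ D₂ hD hDdisj N₁ N₂ hK₁ hK₂ f₁ f₂ hf₁ hf₂ V xlo xhi xh uh γh₁ γh₂ gh hfeas
    hopt
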